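/- If G is the cover graph of a 2-dimensional poset P, then eye(G) ≤ 2. -/

import Mathlib

open SimpleGraph

/-- `x` is covered by `y` with respect to the order-like relation `le`. -/
def CovRel {α : Type*} (le : α → α → Prop) (x y : α) : Prop :=
  le x y ∧ x ≠ y ∧ ∀ z, le x z → le z y → z = x ∨ z = y

/-- The cover graph of (the poset given by) the relation `le`. -/
def coverGraph {α : Type*} (le : α → α → Prop) : SimpleGraph α where
  Adj x y := CovRel le x y ∨ CovRel le y x
  symm := by constructor; intro x y h; tauto
  loopless := by constructor; intro x h; rcases h with ⟨_, h2, _⟩ | ⟨_, h2, _⟩ <;> exact h2 rfl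

/-- A family of linear orders whose intersection is `le` (each is then a linear
extension of `le`). -/
def IsRealizer {α : Type*} (le : α → α → Prop) {t : ℕ} (L : Fin t → α → α → Prop) : Prop :=
  (∀ i, IsLinearOrder α (L i)) ∧ ∀ x y, le x y ↔ ∀ i, L i x y

/-- The order dimension of the poset given by `le`: the least positive size of a realizer. -/
noncomputable def dimRel {α : Type*} (le : α → α → Prop) : ℕ :=
  sInf {t | 0 < t ∧ ∃ L : Fin t → α → α → Prop, IsRealizer le L}

/-- `x` lies strictly between `y` and `z` in the linear order (given as a `≤`-relation) `L`. -/
def StrictBtw {α : Type*} (L : α → α → Prop) (y x z : α) : Prop :=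
  (L y x ∧ L x z ∧ x ≠ y ∧ x ≠ z) ∨ (L z x ∧ L x y ∧ x ≠ y ∧ x ≠ z)

/-- A family of linear orders witnessing the eye condition for `G`. -/
def IsEyeFamily {α : Type*} (G : SimpleGraph α) {s : ℕ} (L : Fin s → α → α → Prop) : Prop :=
  (∀ i, IsLinearOrder α (L i)) ∧
  ∀ x y z : α, x ≠ y → x ≠ z → y ≠ z → G.Adj y z → ∃ i, ¬ StrictBtw (L i) y x z

/-- The eye parameter of a graph. -/
noncomputable def eye {α : Type*} (G : SimpleGraph α) : ℕ :=
  sInf {s | 0 < s ∧ ∃ L : Fin s → α → α → Prop, IsEyeFamily G L}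

/-- Ground set of the incidence poset of `G`: vertices together with edges. -/
def IncGround {V : Type*} (G : SimpleGraph V) : Type _ := V ⊕ G.edgeSet

/-- The order of the incidence poset of `G`: vertices are minimal, edges are maximal,
and a vertex is below an edge exactly when it is one of its endpoints
(i.e. inclusion order, viewing edges as 2-element vertex sets). -/
def incLE {V : Type*} (G : SimpleGraph V) : IncGround G → IncGround G → Prop
  | Sum.inl x, Sum.inl y => x = y
  | Sum.inl x, Sum.inr e => x ∈ (e : Sym2 V)
  | Sum.inr _, Sum.inl _ => False
  | Sum.inr e, Sum.inr f => e = f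

/-- The dimension of the incidence poset of `G`. -/
noncomputable def incDim {V : Type*} (G : SimpleGraph V) : ℕ := dimRel (incLE G)

/-- A family of linear extensions of `le` such that whenever `z` covers both `x` and `y`,
some member puts `x` above `y`: an upper-cover realizer. -/
def IsUCRealizer {α : Type*} (le : α → α → Prop) {t : ℕ} (L : Fin t → α → α → Prop) : Prop :=
  (∀ i, IsLinearOrder α (L i)) ∧ (∀ x y, le x y → ∀ i, L i x y) ∧
  ∀ z x y : α, CovRel le x z → CovRel le y z → x ≠ y → ∃ i, L i y x

/-- The upper cover dimension: least positive size of an upper-cover realizer. -/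
noncomputable def dimUC {α : Type*} (le : α → α → Prop) : ℕ :=
  sInf {t | 0 < t ∧ ∃ L : Fin t → α → α → Prop, IsUCRealizer le L}

/-- The poset given by `le` has height exactly `r`. -/
def HeightEq {α : Type*} (le : α → α → Prop) (r : ℕ) : Prop :=
  (∃ c : Finset α, IsChain le (c : Set α) ∧ c.card = r) ∧
  ∀ c : Finset α, IsChain le (c : Set α) → c.card ≤ r


/-
The linear orders of any realizer already form an eye family for the cover graph. If `{y, z}`
is a cover `y ⋖ z`, every realizer order puts `y` below `z`, so `x` strictly between them in
every order gives `y ≤ x ≤ z` in the intersection, which is the poset itself: this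
contradicts `y ⋖ z`.
-/

theorem StrictBtw.symm {α : Type*} {L : α → α → Prop} {y x z : α}
    (h : StrictBtw L y x z) : StrictBtw L z x y := by
  unfold StrictBtw at *
  tauto

theorem StrictBtw.between_of_le {α : Type*} {L : α → α → Prop} [IsLinearOrder α L] {y x z : α}
    (h : StrictBtw L y x z) (hyz : L y z) : L y x ∧ L x z := by
  rcases h with ⟨hyx, hxz, -, -⟩ | ⟨hzx, hxy, hne, -⟩
  · exact ⟨hyx, hxz⟩
  · exact absurd (antisymm hxy (_root_.trans hyz hzx)) hne

theorem IsRealizer.not_forall_strictBtw_of_covRel {α : Type*} {le : α → α → Prop} {t : ℕ}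
    {L : Fin t → α → α → Prop} (hL : IsRealizer le L) {x y z : α} (hxy : x ≠ y) (hxz : x ≠ z)
    (hcov : CovRel le y z) : ¬ ∀ i, StrictBtw (L i) y x z := by
  obtain ⟨hlin, hiff⟩ := hL
  obtain ⟨hyz, -, hmid⟩ := hcov
  intro hbtw
  have hbetween : ∀ i, L i y x ∧ L i x z := fun i =>
    haveI := hlin i
    (hbtw i).between_of_le ((hiff y z).mp hyz i)
  have hyx : le y x := (hiff y x).mpr fun i => (hbetween i).1
  have hxz' : le x z := (hiff x z).mpr fun i => (hbetween i).2
  rcases hmid x hyx hxz' with rfl | rfl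
  · exact hxy rfl
  · exact hxz rfl

theorem IsRealizer.isEyeFamily_coverGraph {α : Type*} {le : α → α → Prop} {t : ℕ}
    {L : Fin t → α → α → Prop} (hL : IsRealizer le L) : IsEyeFamily (coverGraph le) L := by
  refine ⟨hL.1, fun x y z hxy hxz _ hadj => ?_⟩
  by_contra! hbtw
  rcases hadj with hcov | hcov
  · exact hL.not_forall_strictBtw_of_covRel hxy hxz hcov hbtw
  · exact hL.not_forall_strictBtw_of_covRel hxz hxy hcov fun i => (hbtw i).symm

/-- If `G` is the cover graph of a 2-dimensional poset (one that is the intersection of two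
linear extensions), then `eye(G) ≤ 2`. -/
theorem stmt_17 {α : Type*} [PartialOrder α]
    (h : ∃ L : Fin 2 → α → α → Prop, IsRealizer ((· ≤ ·) : α → α → Prop) L) :
    eye (coverGraph ((· ≤ ·) : α → α → Prop)) ≤ 2 := by
  obtain ⟨L, hL⟩ := h
  exact Nat.sInf_le ⟨two_pos, L, hL.isEyeFamily_coverGraph⟩
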